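/- Let x range over ℝ³ and let y₁, y₂, z₁, z₂ ∈ ℝ³ satisfy ‖z₁‖ = ‖z₂‖ = 1, z₁ ≠ z₂, z₁ ≠ −z₂, ⟨z₁, y₁⟩ = 0, and ⟨z₂, y₂⟩ = 0. Then the system of equations z₁ ×₃ x = y₁ and z₂ ×₃ x = y₂ has a solution x ∈ ℝ³ if and only if ⟨z₁ ×₃ y₁ − z₂ ×₃ y₂, z₁ ×₃ z₂⟩ = 0. -/

import Mathlib

open scoped RealInnerProductSpace

noncomputable section

abbrev E3 := EuclideanSpace ℝ (Fin 3)

/-- The cross product on `ℝ³`. -/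
def cross3 (x y : E3) : E3 :=
  (EuclideanSpace.equiv (Fin 3) ℝ).symm
    ![x 1 * y 2 - x 2 * y 1, x 2 * y 0 - x 0 * y 2, x 0 * y 1 - x 1 * y 0]

/-!
By the Binet–Cauchy identity `⟪a × p, c × d⟫ = ⟪a, c⟫⟪p, d⟫ - ⟪a, d⟫⟪p, c⟫`, the condition reduces to
`⟪y₁, z₂⟫ + ⟪y₂, z₁⟫ = 0`; it is necessary because the triple product `⟪z × x, w⟫` is
antisymmetric in `z, w`. Conversely, for a unit vector `z ⊥ y` the solutions of `z × x = y` are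
the line `y × z + ℝ z`. The lines for the two equations meet iff `y₁ × z₁ - y₂ × z₂` lies in the
span of `z₁, z₂`, i.e. is orthogonal to `z₁ × z₂ ≠ 0`, and that inner product is again
`-(⟪y₁, z₂⟫ + ⟪y₂, z₁⟫)`.
-/

open Matrix

theorem EuclideanSpace.real_inner_eq_dotProduct {ι : Type*} [Fintype ι]
    (x y : EuclideanSpace ℝ ι) : ⟪x, y⟫ = x.ofLp ⬝ᵥ y.ofLp := by
  rw [EuclideanSpace.inner_eq_star_dotProduct, star_trivial, dotProduct_comm]

open EuclideanSpace

lemma ofLp_cross3 (x y : E3) : (cross3 x y).ofLp = x.ofLp ⨯₃ y.ofLp := rfl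

lemma cross3_anticomm (x y : E3) : cross3 y x = -cross3 x y := by
  apply WithLp.ofLp_injective
  simp only [ofLp_cross3, WithLp.ofLp_neg, cross_anticomm]

lemma inner_cross3_swap (a b x : E3) : ⟪cross3 b x, a⟫ = -⟪cross3 a x, b⟫ := by
  rw [real_inner_eq_dotProduct, real_inner_eq_dotProduct, ofLp_cross3, ofLp_cross3,
    dotProduct_comm, triple_product_permutation, ← cross_anticomm, dotProduct_neg,
    dotProduct_comm]

lemma inner_cross3_cross3 (u v w x : E3) :
    ⟪cross3 u v, cross3 w x⟫ = ⟪u, w⟫ * ⟪v, x⟫ - ⟪u, x⟫ * ⟪v, w⟫ := by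
  simp only [real_inner_eq_dotProduct, ofLp_cross3, cross_dot_cross]

lemma inner_cross3_self_smul (a b v : E3) :
    ⟪cross3 a b, cross3 a b⟫ • v = (⟪b, b⟫ * ⟪a, v⟫ - ⟪a, b⟫ * ⟪b, v⟫) • a
      + (⟪a, a⟫ * ⟪b, v⟫ - ⟪a, b⟫ * ⟪a, v⟫) • b + ⟪cross3 a b, v⟫ • cross3 a b := by
  apply WithLp.ofLp_injective
  simp only [real_inner_eq_dotProduct, ofLp_cross3, WithLp.ofLp_add, WithLp.ofLp_smul,
    vec3_dotProduct, cross_apply]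
  ext i
  fin_cases i <;>
  · simp only [Fin.isValue, Fin.zero_eta, Fin.mk_one, Fin.reduceFinMk, cons_val_zero,
      cons_val_one, cons_val, Pi.add_apply, Pi.smul_apply, smul_eq_mul, smul_cons, smul_empty]
    ring

lemma exists_eq_smul_add_smul_of_inner_cross3_eq_zero {a b v : E3} (hab : cross3 a b ≠ 0)
    (hv : ⟪cross3 a b, v⟫ = 0) : ∃ s t : ℝ, v = s • a + t • b := by
  have hc : ⟪cross3 a b, cross3 a b⟫ ≠ 0 := inner_self_ne_zero (𝕜 := ℝ) |>.mpr hab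
  refine ⟨(⟪b, b⟫ * ⟪a, v⟫ - ⟪a, b⟫ * ⟪b, v⟫) / ⟪cross3 a b, cross3 a b⟫,
    (⟪a, a⟫ * ⟪b, v⟫ - ⟪a, b⟫ * ⟪a, v⟫) / ⟪cross3 a b, cross3 a b⟫, ?_⟩
  rw [← smul_right_inj hc, inner_cross3_self_smul, hv, zero_smul, add_zero, smul_add, smul_smul,
    smul_smul, mul_div_cancel₀ _ hc, mul_div_cancel₀ _ hc]

lemma cross3_ne_zero {a b : E3} (ha : ‖a‖ = 1) (hb : ‖b‖ = 1) (hne : a ≠ b) (hne' : a ≠ -b) :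
    cross3 a b ≠ 0 := by
  have h₁ : ⟪a, b⟫ ≠ 1 := mt (inner_eq_one_iff_of_norm_eq_one ha hb).mp hne
  have h₂ : ⟪a, b⟫ ≠ -1 := by
    rw [ne_eq, ← neg_eq_iff_eq_neg, ← inner_neg_right]
    exact mt (inner_eq_one_iff_of_norm_eq_one ha (by rwa [norm_neg])).mp hne'
  rw [← inner_self_ne_zero (𝕜 := ℝ), inner_cross3_cross3, real_inner_self_eq_norm_sq,
    real_inner_self_eq_norm_sq, ha, hb, real_inner_comm a b, one_pow, mul_one, ne_eq,
    sub_eq_zero, eq_comm, mul_self_eq_one_iff, not_or]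
  exact ⟨h₁, h₂⟩

lemma cross3_cross3_add_smul_self {a p : E3} (ha : ‖a‖ = 1) (hp : ⟪a, p⟫ = 0) (s : ℝ) :
    cross3 a (cross3 p a + s • a) = p := by
  apply WithLp.ofLp_injective
  rw [ofLp_cross3, WithLp.ofLp_add, WithLp.ofLp_smul, ofLp_cross3, map_add, map_smul, cross_self,
    smul_zero, add_zero, cross_cross_eq_smul_sub_smul', ← real_inner_eq_dotProduct,
    ← real_inner_eq_dotProduct, real_inner_self_eq_norm_sq, ha, real_inner_comm a p, hp]
  simp

lemma inner_cross3_sub_cross3_cross3 {a b p q : E3} (ha : ‖a‖ = 1) (hb : ‖b‖ = 1)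
    (hp : ⟪a, p⟫ = 0) (hq : ⟪b, q⟫ = 0) :
    ⟪cross3 a p - cross3 b q, cross3 a b⟫ = ⟪p, b⟫ + ⟪q, a⟫ := by
  rw [inner_sub_left, inner_cross3_cross3, inner_cross3_cross3, real_inner_self_eq_norm_sq,
    real_inner_self_eq_norm_sq, ha, hb, real_inner_comm a p, hp, real_inner_comm b q, hq]
  ring

lemma exists_cross3_eq_and_cross3_eq {a b p q : E3} (ha : ‖a‖ = 1) (hb : ‖b‖ = 1)
    (hab : cross3 a b ≠ 0) (hp : ⟪a, p⟫ = 0) (hq : ⟪b, q⟫ = 0) (h : ⟪p, b⟫ + ⟪q, a⟫ = 0) :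
    ∃ x, cross3 a x = p ∧ cross3 b x = q := by
  have hv : ⟪cross3 a b, cross3 p a - cross3 q b⟫ = 0 := by
    rw [real_inner_comm, cross3_anticomm a p, cross3_anticomm b q, ← neg_sub', inner_neg_left,
      inner_cross3_sub_cross3_cross3 ha hb hp hq, h, neg_zero]
  obtain ⟨s, t, hst⟩ := exists_eq_smul_add_smul_of_inner_cross3_eq_zero hab hv
  have hx : cross3 p a + (-s) • a = cross3 q b + t • b := by
    linear_combination (norm := module) hst
  exact ⟨cross3 p a + (-s) • a, cross3_cross3_add_smul_self ha hp _,
    hx ▸ cross3_cross3_add_smul_self hb hq _⟩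

/-- Lemma 1: the system `z₁ × x = y₁`, `z₂ × x = y₂` (with `z₁, z₂` unit vectors,
`z₁ ≠ ±z₂`, `z₁ ⊥ y₁`, `z₂ ⊥ y₂`) has a solution `x` iff
`⟨z₁ × y₁ − z₂ × y₂, z₁ × z₂⟩ = 0`. -/
theorem cross_system_solvable_iff
    (y₁ y₂ z₁ z₂ : E3)
    (hz₁ : ‖z₁‖ = 1) (hz₂ : ‖z₂‖ = 1)
    (hne : z₁ ≠ z₂) (hne' : z₁ ≠ -z₂)
    (hy₁ : ⟪z₁, y₁⟫ = 0) (hy₂ : ⟪z₂, y₂⟫ = 0) :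
    (∃ x : E3, cross3 z₁ x = y₁ ∧ cross3 z₂ x = y₂) ↔
      ⟪cross3 z₁ y₁ - cross3 z₂ y₂, cross3 z₁ z₂⟫ = 0 := by
  rw [inner_cross3_sub_cross3_cross3 hz₁ hz₂ hy₁ hy₂]
  constructor
  · rintro ⟨x, rfl, rfl⟩
    rw [inner_cross3_swap, neg_add_cancel]
  · exact exists_cross3_eq_and_cross3_eq hz₁ hz₂ (cross3_ne_zero hz₁ hz₂ hne hne') hy₁ hy₂
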